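/- Fix α ∈ ℂ and ρ, η > 0 with the closed disk of center α and radius ρ + 2η contained in the open unit disk. For δ ∈ [0, η], define ψ_δ : D(0;1) → D(0;1) by ψ_δ(α + r e^{iθ}) = α + ((ρ+δ)/ρ) r e^{iθ} for 0 ≤ r ≤ ρ, ψ_δ(α + r e^{iθ}) = α + (½(r−ρ) + ρ + δ) e^{iθ} for ρ ≤ r ≤ ρ + 2δ, and ψ_δ = identity elsewhere. Then each ψ_δ is a homeomorphism of the open unit disk, and for all ε, δ ∈ [0, η] and all z ∈ D(0;1), |ψ_ε(z) − ψ_δ(z)| ≤ |ε − δ|; in particular δ ↦ ψ_δ is continuous into H(D(0;1)) with the uniform topology. -/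

import Mathlib

/-!
Each `ψ_δ` is the radial map `z ↦ α + f_δ(|z - α|) (z - α) / |z - α|` of a piecewise-linear
profile `f_δ`, an increasing homeomorphism of `ℝ` that fixes `0` and every `r ≥ ρ + 2δ`.
Radial maps compose like their profiles, so `ψ_δ` is a homeomorphism of every set containing
`closedBall α (ρ + 2δ)`, with inverse the radial map of `f_δ⁻¹`. At a point at distance `r`
from `α`, two radial maps are `|f_ε r - f_δ r| ≤ |ε - δ|` apart; since `f_δ r - r / 2` is
monotone, the inverse profiles are at most `2 |ε - δ|` apart. Lipschitz bounds in the parameter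
that are uniform in `z` make `(δ, z) ↦ ψ_δ z` and `(δ, z) ↦ ψ_δ⁻¹ z` jointly continuous, which is
continuity into the compact-open topology.
-/

open Metric
open scoped NNReal

/-- The topology of uniform convergence on compacts (compact-open topology) on the
homeomorphism group of the open unit disk, on maps and their inverses. -/
noncomputable instance diskHomeoTop :
    TopologicalSpace ((Metric.ball (0 : ℂ) 1) ≃ₜ (Metric.ball (0 : ℂ) 1)) :=
  TopologicalSpace.induced
    (fun h : (Metric.ball (0 : ℂ) 1) ≃ₜ (Metric.ball (0 : ℂ) 1) =>
      ((⟨h, h.continuous⟩ : C(Metric.ball (0 : ℂ) 1, Metric.ball (0 : ℂ) 1)),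
       (⟨h.symm, h.symm.continuous⟩ : C(Metric.ball (0 : ℂ) 1, Metric.ball (0 : ℂ) 1))))
    inferInstance

noncomputable def radialMap (α : ℂ) (f : ℝ → ℝ) (z : ℂ) : ℂ :=
  α + ((f ‖z - α‖ / ‖z - α‖ : ℝ) : ℂ) * (z - α)

section radialMap

variable {α : ℂ} {f g : ℝ → ℝ}

@[simp]
lemma radialMap_self : radialMap α f α = α := by
  simp [radialMap]

lemma radialMap_sub (z : ℂ) :
    radialMap α f z - α = ((f ‖z - α‖ / ‖z - α‖ : ℝ) : ℂ) * (z - α) :=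
  add_sub_cancel_left _ _

lemma norm_radialMap_sub (hf0 : f 0 = 0) (z : ℂ) : ‖radialMap α f z - α‖ = |f ‖z - α‖| := by
  rcases eq_or_ne z α with rfl | hz
  · simp [hf0]
  · rw [radialMap_sub, norm_mul, Complex.norm_real, Real.norm_eq_abs, abs_div, abs_norm,
      div_mul_cancel₀ _ (norm_ne_zero_iff.2 (sub_ne_zero.2 hz))]

lemma radialMap_of_apply_eq {z : ℂ} (hz : f ‖z - α‖ = ‖z - α‖) : radialMap α f z = z := by
  rcases eq_or_ne z α with rfl | hzα
  · exact radialMap_self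
  · rw [radialMap, hz, div_self (norm_ne_zero_iff.2 (sub_ne_zero.2 hzα)), Complex.ofReal_one,
      one_mul, add_sub_cancel]

lemma dist_radialMap_radialMap_le (z : ℂ) :
    dist (radialMap α f z) (radialMap α g z) ≤ |f ‖z - α‖ - g ‖z - α‖| := by
  rcases eq_or_ne z α with rfl | hz
  · simp
  have : radialMap α f z - radialMap α g z
      = (((f ‖z - α‖ - g ‖z - α‖) / ‖z - α‖ : ℝ) : ℂ) * (z - α) := by
    simp only [radialMap]; push_cast; ring
  rw [dist_eq_norm, this, norm_mul, Complex.norm_real, Real.norm_eq_abs, abs_div, abs_norm,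
    div_mul_cancel₀ _ (norm_ne_zero_iff.2 (sub_ne_zero.2 hz))]

lemma leftInverse_radialMap (hfg : Function.LeftInverse g f) (hf0 : f 0 = 0)
    (hf : ∀ r, 0 < r → 0 < f r) : Function.LeftInverse (radialMap α g) (radialMap α f) := by
  intro z
  rcases eq_or_ne z α with rfl | hz
  · simp
  have hr : 0 < ‖z - α‖ := norm_pos_iff.2 (sub_ne_zero.2 hz)
  nth_rw 1 [radialMap]
  rw [norm_radialMap_sub hf0, abs_of_pos (hf _ hr), hfg,
    radialMap_sub, ← mul_assoc, ← Complex.ofReal_mul, div_mul_div_cancel₀ (hf _ hr).ne',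
    div_self hr.ne', Complex.ofReal_one, one_mul, add_sub_cancel]

lemma continuous_radialMap (hf : Continuous f) (hf0 : f 0 = 0) : Continuous (radialMap α f) := by
  refine continuous_iff_continuousAt.2 fun z => ?_
  rcases eq_or_ne z α with rfl | hz
  · -- the factor `f r / r` is junk at `r = 0`, but the displacement has norm `|f r| → 0`
    rw [ContinuousAt, radialMap_self, tendsto_iff_norm_sub_tendsto_zero]
    simp_rw [norm_radialMap_sub hf0]
    have : Continuous fun w => |f ‖w - z‖| := by fun_prop
    simpa [hf0] using this.tendsto z
  · have : ‖z - α‖ ≠ 0 := norm_ne_zero_iff.2 (sub_ne_zero.2 hz)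
    unfold radialMap
    fun_prop (disch := exact this)

lemma radialMap_mem_of_closedBall_subset (φ : ℝ ≃o ℝ) (h0 : φ 0 = 0) {R : ℝ}
    (hR : ∀ r, R ≤ r → φ r = r) {S : Set ℂ} (hS : closedBall α R ⊆ S) {z : ℂ} (hz : z ∈ S) :
    radialMap α φ z ∈ S := by
  rcases le_or_gt ‖z - α‖ R with h | h
  · apply hS
    rw [mem_closedBall, dist_eq_norm, norm_radialMap_sub h0,
      abs_of_nonneg (h0 ▸ φ.monotone (norm_nonneg _)), ← hR R le_rfl]
    exact φ.monotone h
  · rwa [radialMap_of_apply_eq (hR _ h.le)]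

end radialMap

section radialHomeomorph

variable (α : ℂ) (φ : ℝ ≃o ℝ) (h0 : φ 0 = 0)

noncomputable def radialHomeomorph : ℂ ≃ₜ ℂ where
  toFun := radialMap α φ
  invFun := radialMap α φ.symm
  left_inv := leftInverse_radialMap φ.symm_apply_apply h0 fun _ hr => h0 ▸ φ.strictMono hr
  right_inv := leftInverse_radialMap φ.apply_symm_apply (φ.symm_apply_eq.2 h0.symm)
    fun _ hr => φ.symm_apply_eq.2 h0.symm ▸ φ.symm.strictMono hr
  continuous_toFun := continuous_radialMap φ.continuous h0
  continuous_invFun := continuous_radialMap φ.symm.continuous (φ.symm_apply_eq.2 h0.symm)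

variable {R : ℝ} (hR : ∀ r, R ≤ r → φ r = r) {S : Set ℂ} (hS : closedBall α R ⊆ S)

noncomputable def radialHomeomorphOn : S ≃ₜ S :=
  (radialHomeomorph α φ h0).subtype fun z =>
    ⟨radialMap_mem_of_closedBall_subset φ h0 hR hS, fun h =>
      (radialHomeomorph α φ h0).symm_apply_apply z ▸
        radialMap_mem_of_closedBall_subset φ.symm (φ.symm_apply_eq.2 h0.symm)
          (fun r hr => φ.symm_apply_eq.2 (hR r hr).symm) hS h⟩

end radialHomeomorph

lemma OrderIso.abs_symm_sub_symm_le {𝕜 : Type*} [Field 𝕜] [LinearOrder 𝕜] [IsStrictOrderedRing 𝕜]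
    {φ ψ : 𝕜 ≃o 𝕜} {c d : 𝕜} (hc : 0 < c) (hψ : Monotone fun r => ψ r - c * r)
    (hd : ∀ r, |φ r - ψ r| ≤ d) (s : 𝕜) : |φ.symm s - ψ.symm s| ≤ d / c := by
  set a := φ.symm s
  set b := ψ.symm s
  have hab : φ a = ψ b := by simp [a, b]
  -- `ψ` expands distances at least by `c`, while `ψ a` is within `d` of `φ a = ψ b`.
  have key : c * |a - b| ≤ |ψ a - ψ b| := by
    rcases le_total a b with h | h
    · have := hψ h
      rw [abs_of_nonpos (sub_nonpos.2 h), abs_of_nonpos (sub_nonpos.2 (ψ.monotone h))]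
      linarith
    · have := hψ h
      rw [abs_of_nonneg (sub_nonneg.2 h), abs_of_nonneg (sub_nonneg.2 (ψ.monotone h))]
      linarith
  rw [le_div_iff₀' hc]
  calc c * |a - b| ≤ |ψ a - ψ b| := key
    _ = |φ a - ψ a| := by rw [hab, abs_sub_comm]
    _ ≤ d := hd a

/-- The profile of `ψ_δ`, written as a max/min of its three affine pieces (slope `(ρ + δ) / ρ` up
to `ρ`, slope `1 / 2` up to `ρ + 2δ`, then the identity); it is also the identity on `r ≤ 0`. -/
noncomputable def stretch (ρ δ r : ℝ) : ℝ :=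
  max r (min ((ρ + δ) / ρ * r) (1 / 2 * (r - ρ) + ρ + δ))

section stretch

variable {ρ δ ε r : ℝ}

lemma stretch_of_le (hρ : 0 < ρ) (hδ : 0 ≤ δ) (hr : r ≤ ρ) :
    stretch ρ δ r = max r ((ρ + δ) / ρ * r) := by
  rw [stretch, min_eq_left (by rw [div_mul_eq_mul_div (ρ + δ) ρ r, div_le_iff₀ hρ]; nlinarith)]

lemma stretch_of_ge (hρ : 0 < ρ) (hδ : 0 ≤ δ) (hr : ρ ≤ r) :
    stretch ρ δ r = max (1 / 2 * (r - ρ) + ρ + δ) r := by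
  rw [stretch, min_eq_right (by rw [div_mul_eq_mul_div (ρ + δ) ρ r, le_div_iff₀ hρ]; nlinarith),
    max_comm]

lemma stretch_of_nonneg_of_le (hρ : 0 < ρ) (hδ : 0 ≤ δ) (hr0 : 0 ≤ r) (hr : r ≤ ρ) :
    stretch ρ δ r = (ρ + δ) / ρ * r := by
  rw [stretch_of_le hρ hδ hr, max_eq_right]
  exact le_mul_of_one_le_left hr0 ((one_le_div hρ).2 (by linarith))

lemma stretch_of_le_of_le (hρ : 0 < ρ) (hδ : 0 ≤ δ) (hr : ρ ≤ r) (hr' : r ≤ ρ + 2 * δ) :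
    stretch ρ δ r = 1 / 2 * (r - ρ) + ρ + δ := by
  rw [stretch_of_ge hρ hδ hr, max_eq_left (by linarith)]

lemma stretch_of_le_add (hρ : 0 < ρ) (hδ : 0 ≤ δ) (hr : ρ + 2 * δ ≤ r) : stretch ρ δ r = r := by
  rw [stretch_of_ge hρ hδ (by linarith), max_eq_right (by linarith)]

lemma stretch_of_nonpos (hρ : 0 < ρ) (hδ : 0 ≤ δ) (hr : r ≤ 0) : stretch ρ δ r = r := by
  rw [stretch_of_le hρ hδ (by linarith), max_eq_left]
  exact mul_le_of_one_le_left hr ((one_le_div hρ).2 (by linarith))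

lemma stretch_zero (hρ : 0 < ρ) (hδ : 0 ≤ δ) : stretch ρ δ 0 = 0 :=
  stretch_of_nonpos hρ hδ le_rfl

lemma continuous_stretch (ρ δ : ℝ) : Continuous (stretch ρ δ) := by
  unfold stretch; fun_prop

lemma monotone_stretch_sub_half_mul (hρ : 0 < ρ) (hδ : 0 ≤ δ) :
    Monotone fun r => stretch ρ δ r - 1 / 2 * r := by
  have hc : 0 ≤ (ρ + δ) / ρ - 1 / 2 := by
    rw [sub_nonneg, le_div_iff₀ hρ]; linarith
  have : ∀ r, stretch ρ δ r - 1 / 2 * r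
      = max (1 / 2 * r) (min (((ρ + δ) / ρ - 1 / 2) * r) (ρ / 2 + δ)) := by
    intro r
    rw [stretch, ← max_sub_sub_right, ← min_sub_sub_right]
    ring_nf
  intro a b hab
  simp only [this]
  gcongr

lemma strictMono_stretch (hρ : 0 < ρ) (hδ : 0 ≤ δ) : StrictMono (stretch ρ δ) := by
  intro a b hab
  have := monotone_stretch_sub_half_mul hρ hδ hab.le
  simp only at this
  linarith

lemma surjective_stretch (hρ : 0 < ρ) (hδ : 0 ≤ δ) : Function.Surjective (stretch ρ δ) :=
  (continuous_stretch ρ δ).surjective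
    (Filter.tendsto_atTop_mono (fun _ => le_max_left _ _) Filter.tendsto_id)
    (Filter.tendsto_id.congr' (Filter.eventually_le_atBot 0 |>.mono
      fun _ hr => (stretch_of_nonpos hρ hδ hr).symm))

lemma abs_stretch_sub_stretch_le (hρ : 0 < ρ) (hε : 0 ≤ ε) (hδ : 0 ≤ δ) (r : ℝ) :
    |stretch ρ ε r - stretch ρ δ r| ≤ |ε - δ| := by
  rcases le_total r 0 with hr0 | hr0
  · simp [stretch_of_nonpos hρ hε hr0, stretch_of_nonpos hρ hδ hr0]
  rcases le_total r ρ with hr | hr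
  · rw [stretch_of_nonneg_of_le hρ hε hr0 hr, stretch_of_nonneg_of_le hρ hδ hr0 hr,
      ← sub_mul, add_div, add_div, add_sub_add_left_eq_sub, ← sub_div, abs_mul, abs_div,
      abs_of_pos hρ, abs_of_nonneg hr0, div_mul_eq_mul_div, div_le_iff₀ hρ]
    exact mul_le_mul_of_nonneg_left hr (abs_nonneg _)
  · rw [stretch_of_ge hρ hε hr, stretch_of_ge hρ hδ hr]
    refine (abs_max_sub_max_le_abs _ _ _).trans_eq ?_
    ring_nf

end stretch

lemma radialMap_stretch {α : ℂ} {ρ δ : ℝ} (hρ : 0 < ρ) (hδ : 0 ≤ δ) (z : ℂ) :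
    radialMap α (stretch ρ δ) z =
      if ‖z - α‖ ≤ ρ then α + (((ρ + δ) / ρ : ℝ) : ℂ) * (z - α)
      else if ‖z - α‖ ≤ ρ + 2 * δ then
        α + (((1 / 2 * (‖z - α‖ - ρ) + ρ + δ) / ‖z - α‖ : ℝ) : ℂ) * (z - α)
      else z := by
  rcases eq_or_ne z α with rfl | hz
  · simp [hρ.le]
  have hr : ‖z - α‖ ≠ 0 := norm_ne_zero_iff.2 (sub_ne_zero.2 hz)
  split_ifs with h₁ h₂
  · rw [radialMap, stretch_of_nonneg_of_le hρ hδ (norm_nonneg _) h₁, mul_div_cancel_right₀ _ hr]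
  · rw [radialMap, stretch_of_le_of_le hρ hδ (not_le.1 h₁).le h₂]
  · exact radialMap_of_apply_eq (stretch_of_le_add hρ hδ (not_le.1 h₂).le)

lemma ContinuousMap.continuous_of_lipschitzWith_apply {T X Y : Type*} [PseudoEMetricSpace T]
    [TopologicalSpace X] [PseudoEMetricSpace Y] {f : T → C(X, Y)} {K : ℝ≥0}
    (hf : ∀ x, LipschitzWith K fun t => f t x) : Continuous f :=
  continuous_of_continuous_uncurry f
    (continuous_prod_of_continuous_lipschitzWith _ K (fun t => (f t).continuous) hf)

lemma continuous_diskHomeo_of_lipschitzWith {T : Type*} [PseudoEMetricSpace T]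
    {h : T → ball (0 : ℂ) 1 ≃ₜ ball (0 : ℂ) 1} {K L : ℝ≥0}
    (hK : ∀ z, LipschitzWith K fun t => h t z) (hL : ∀ z, LipschitzWith L fun t => (h t).symm z) :
    Continuous h :=
  continuous_induced_rng.2 <| (ContinuousMap.continuous_of_lipschitzWith_apply
    (f := fun t => ⟨h t, (h t).continuous⟩) hK).prodMk
    (ContinuousMap.continuous_of_lipschitzWith_apply
      (f := fun t => ⟨(h t).symm, (h t).symm.continuous⟩) hL)

section diskStretch

variable {α : ℂ} {ρ η δ : ℝ}

noncomputable def stretchIso (hρ : 0 < ρ) (hδ : 0 ≤ δ) : ℝ ≃o ℝ :=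
  StrictMono.orderIsoOfSurjective _ (strictMono_stretch hρ hδ) (surjective_stretch hρ hδ)

noncomputable def diskStretch (hρ : 0 < ρ) (hsub : closedBall α (ρ + 2 * η) ⊆ ball 0 1)
    (δ : Set.Icc 0 η) : ball (0 : ℂ) 1 ≃ₜ ball (0 : ℂ) 1 :=
  radialHomeomorphOn α (stretchIso hρ δ.2.1) (stretch_zero hρ δ.2.1)
    (fun _ hr => stretch_of_le_add hρ δ.2.1 hr)
    ((closedBall_subset_closedBall (by linarith [δ.2.2])).trans hsub)

variable (hρ : 0 < ρ) (hsub : closedBall α (ρ + 2 * η) ⊆ ball 0 1)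

lemma coe_diskStretch_apply (δ : Set.Icc 0 η) (z : ball (0 : ℂ) 1) :
    (diskStretch hρ hsub δ z : ℂ) = radialMap α (stretch ρ δ) z :=
  rfl

lemma coe_diskStretch_symm_apply (δ : Set.Icc 0 η) (z : ball (0 : ℂ) 1) :
    ((diskStretch hρ hsub δ).symm z : ℂ) = radialMap α (stretchIso hρ δ.2.1).symm z :=
  rfl

lemma norm_diskStretch_sub_le (ε δ : Set.Icc 0 η) (z : ball (0 : ℂ) 1) :
    ‖(diskStretch hρ hsub ε z : ℂ) - diskStretch hρ hsub δ z‖ ≤ |(ε : ℝ) - δ| := by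
  rw [coe_diskStretch_apply, coe_diskStretch_apply, ← dist_eq_norm]
  exact (dist_radialMap_radialMap_le _).trans (abs_stretch_sub_stretch_le hρ ε.2.1 δ.2.1 _)

lemma norm_diskStretch_symm_sub_le (ε δ : Set.Icc 0 η) (z : ball (0 : ℂ) 1) :
    ‖((diskStretch hρ hsub ε).symm z : ℂ) - (diskStretch hρ hsub δ).symm z‖
      ≤ 2 * |(ε : ℝ) - δ| := by
  rw [coe_diskStretch_symm_apply, coe_diskStretch_symm_apply, ← dist_eq_norm]
  refine (dist_radialMap_radialMap_le _).trans ?_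
  have := OrderIso.abs_symm_sub_symm_le one_half_pos (monotone_stretch_sub_half_mul hρ δ.2.1)
    (abs_stretch_sub_stretch_le hρ ε.2.1 δ.2.1) (φ := stretchIso hρ ε.2.1)
    (ψ := stretchIso hρ δ.2.1) ‖(z : ℂ) - α‖
  linarith

lemma continuous_diskStretch : Continuous (diskStretch hρ hsub) :=
  continuous_diskHomeo_of_lipschitzWith (K := 1) (L := 2)
    (fun z => .of_dist_le_mul fun ε δ => by
      simpa [Subtype.dist_eq, dist_eq_norm] using norm_diskStretch_sub_le hρ hsub ε δ z)
    (fun z => .of_dist_le_mul fun ε δ => by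
      simpa [Subtype.dist_eq, dist_eq_norm] using norm_diskStretch_symm_sub_le hρ hsub ε δ z)

end diskStretch

/-- For `α ∈ ℂ`, `ρ, η > 0` with `closedBall α (ρ + 2η) ⊆ D(0;1)`, there is a family
`ψ_δ` (for `δ ∈ [0, η]`) of homeomorphisms of the open unit disk: `ψ_δ` expands
radially around `α` by the factor `(ρ+δ)/ρ` on `|z − α| ≤ ρ`, sends `α + r e^{iθ}` to
`α + (½(r−ρ)+ρ+δ) e^{iθ}` for `ρ ≤ r ≤ ρ + 2δ`, and is the identity elsewhere.
Moreover `|ψ_ε(z) − ψ_δ(z)| ≤ |ε − δ|` for all `z`, and `δ ↦ ψ_δ` is continuous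
on `[0, η]` into `H(D(0;1))`. -/
theorem stmt19 (α : ℂ) (ρ η : ℝ) (hρ : 0 < ρ) (hη : 0 < η)
    (hsub : Metric.closedBall α (ρ + 2 * η) ⊆ Metric.ball (0 : ℂ) 1) :
    ∃ ψ : ℝ → ((Metric.ball (0 : ℂ) 1) ≃ₜ (Metric.ball (0 : ℂ) 1)),
      (∀ δ ∈ Set.Icc (0 : ℝ) η, ∀ z : Metric.ball (0 : ℂ) 1,
        ((ψ δ z : ℂ) : ℂ) =
          (if ‖(z : ℂ) - α‖ ≤ ρ then
            α + (((ρ + δ) / ρ) : ℝ) * ((z : ℂ) - α)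
          else if ‖(z : ℂ) - α‖ ≤ ρ + 2 * δ then
            α + ((((1 / 2) * (‖(z : ℂ) - α‖ - ρ) + ρ + δ) /
              ‖(z : ℂ) - α‖) : ℝ) * ((z : ℂ) - α)
          else (z : ℂ))) ∧
      (∀ ε ∈ Set.Icc (0 : ℝ) η, ∀ δ ∈ Set.Icc (0 : ℝ) η,
        ∀ z : Metric.ball (0 : ℂ) 1,
          ‖(ψ ε z : ℂ) - (ψ δ z : ℂ)‖ ≤ |ε - δ|) ∧
      ContinuousOn ψ (Set.Icc (0 : ℝ) η) := by
  refine ⟨fun δ => diskStretch hρ hsub (Set.projIcc 0 η hη.le δ), fun δ hδ z => ?_,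
    fun ε hε δ hδ z => ?_, (continuous_diskStretch hρ hsub |>.comp continuous_projIcc).continuousOn⟩
  · dsimp only
    rw [Set.projIcc_of_mem _ hδ, coe_diskStretch_apply]
    exact radialMap_stretch hρ hδ.1 z
  · simpa only [Set.projIcc_of_mem _ hε, Set.projIcc_of_mem _ hδ]
      using norm_diskStretch_sub_le hρ hsub _ _ z
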